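/- arXiv:2008.12600 — 2 statements merged into one kernel-verified Lean document; each statement's English description precedes it below -/
import Mathlib

section
/- For all z ≠ z̄ in (0,1), the sum of twist-two four-dimensional conformal blocks with free-field OPE coefficients resums to the connected free-scalar correlator: ∑_{ℓ = 0,2,4,…} 2·(Γ(ℓ+1)²/Γ(2ℓ+1)) · G_{2,ℓ}(z,z̄) = z z̄ / ((1−z)(1−z̄)) + z z̄. -/
open Real

/-- Pochhammer symbol `(a)_n = a (a+1) ⋯ (a+n-1)`. -/
noncomputable def poch (a : ℝ) (n : ℕ) : ℝ := (ascPochhammer ℝ n).eval a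

/-- Gauss hypergeometric series `₂F₁(a,b;c;x)`. -/
noncomputable def F21 (a b c x : ℝ) : ℝ :=
  ∑' n : ℕ, poch a n * poch b n / (poch c n * (n.factorial : ℝ)) * x ^ n

/-- The SL(2,ℝ) collinear conformal block `k_β(x) = x^β ₂F₁(β,β;2β;x)`. -/
noncomputable def kblock (β x : ℝ) : ℝ := x ^ β * F21 β β (2 * β) x

/-- The twist-two four-dimensional conformal block
`G_{2,ℓ}(z,z̄) = (z z̄/(z−z̄))·(k_{ℓ+1}(z) − k_{ℓ+1}(z̄))`. -/
noncomputable def G2block (ℓ : ℕ) (z zb : ℝ) : ℝ :=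
  z * zb / (z - zb) * (kblock ((ℓ : ℝ) + 1) z - kblock ((ℓ : ℝ) + 1) zb)

/-!
With `a_ℓ = 2 (ℓ!)² / (2ℓ)!`, expanding the hypergeometric series gives
`a_ℓ k_{ℓ+1}(x) = ∑_m c(ℓ,m) x^{ℓ+1+m}` with `c(ℓ,m) = 2(2ℓ+1) ((ℓ+m)!)² / ((2ℓ+1+m)! m!) ≥ 0`.
Collecting the even spins by the degree `N` of `x`, the coefficient `∑_{2n<N} c(2n, N-2n-1)`
telescopes to `1` for `N ≥ 2` (it is `2` for `N = 1`), so by positivity the regrouping is legitimate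
and `f(x) := ∑_{ℓ even} a_ℓ k_{ℓ+1}(x) = x/(1-x) + x`. Summed against `a_ℓ`, the
four-dimensional blocks give the divided difference `z z̄ (f(z) - f(z̄)) / (z - z̄)`.
-/

open Finset Function Nat

lemma poch_natCast_add_one (k m : ℕ) : poch (k + 1) m = (k + m)! / k ! := by
  rw [poch, ← Nat.cast_succ, ascPochhammer_nat_eq_natCast_ascFactorial,
    eq_div_iff (by positivity), mul_comm]
  exact_mod_cast Nat.factorial_mul_ascFactorial k m

noncomputable def freeOPECoeff (ℓ : ℕ) : ℝ := 2 * (ℓ ! : ℝ) ^ 2 / (2 * ℓ)!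

lemma two_mul_Gamma_sq_div_Gamma (ℓ : ℕ) :
    2 * (Gamma (ℓ + 1) ^ 2 / Gamma (2 * ℓ + 1)) = freeOPECoeff ℓ := by
  rw [show 2 * (ℓ : ℝ) + 1 = (2 * ℓ : ℕ) + 1 by push_cast; ring, Gamma_nat_eq_factorial,
    Gamma_nat_eq_factorial, freeOPECoeff, mul_div_assoc]

noncomputable def blockCoeff (ℓ m : ℕ) : ℝ :=
  2 * (2 * ℓ + 1) * ((ℓ + m)! : ℝ) ^ 2 / ((2 * ℓ + 1 + m)! * m !)

lemma freeOPECoeff_mul_kblock (ℓ : ℕ) (x : ℝ) :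
    freeOPECoeff ℓ * kblock (ℓ + 1) x = ∑' m, blockCoeff ℓ m * x ^ (ℓ + 1 + m) := by
  have hβ : 2 * ((ℓ : ℝ) + 1) = ((2 * ℓ + 1 : ℕ) : ℝ) + 1 := by push_cast; ring
  rw [kblock, F21, hβ, ← Nat.cast_succ, Real.rpow_natCast, ← tsum_mul_left, ← tsum_mul_left]
  congr 1 with m
  rw [Nat.cast_succ, poch_natCast_add_one, poch_natCast_add_one, freeOPECoeff, blockCoeff,
    pow_add, Nat.factorial_succ (2 * ℓ)]
  push_cast
  field_simp

/-- With `N = M + 2` the degree in `x`, this is `(N-2)! (N-1)! / ((N+2n-2)! (N-2n-1)!)`, the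
antidifference of `n ↦ blockCoeff (2n) (N-2n-1)`; the `if` plays the role of `1/(N-2n-1)! = 0`
for `2n ≥ N`. -/
noncomputable def telescope (M n : ℕ) : ℝ :=
  if 2 * n ≤ M + 1 then (M ! * (M + 1)! : ℝ) / ((M + 2 * n)! * (M + 1 - 2 * n)!) else 0

lemma telescope_of_eq {M n k L : ℕ} (hk : M + 1 = 2 * n + k) (hL : M + 2 * n = L) :
    telescope M n = (M ! * (M + 1)! : ℝ) / (L ! * k !) := by
  rw [telescope, if_pos (by omega), hL, show M + 1 - 2 * n = k by omega]

lemma telescope_of_lt {M n : ℕ} (h : M + 1 < 2 * n) : telescope M n = 0 := by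
  rw [telescope, if_neg (by omega)]

lemma blockCoeff_eq_telescope_sub {M n : ℕ} (h : 2 * n ≤ M + 1) :
    blockCoeff (2 * n) (M + 1 - 2 * n) = telescope M n - telescope M (n + 1) := by
  obtain ⟨k, hk⟩ := Nat.exists_eq_add_of_le h
  rw [show M + 1 - 2 * n = k by omega]
  -- `telescope M (n + 1)` vanishes unless `k ≥ 2`; for `k = 0` we have `n ≥ 1` since `M + 1 ≥ 1`.
  rcases k with _ | _ | j
  · obtain ⟨p, rfl⟩ : ∃ p, n = p + 1 := ⟨n - 1, by omega⟩
    obtain rfl : M = 2 * p + 1 := by omega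
    rw [telescope_of_eq hk (L := 4 * p + 3) (by omega), telescope_of_lt (by omega), blockCoeff,
      show 2 * (2 * (p + 1)) + 1 + 0 = 4 * p + 5 by omega,
      show 2 * (p + 1) + 0 = 2 * p + 2 by omega]
    simp only [Nat.factorial_succ]
    push_cast
    field_simp
    ring
  · obtain rfl : M = 2 * n := by omega
    rw [telescope_of_eq hk (L := 4 * n) (by omega), telescope_of_lt (by omega), blockCoeff,
      show 2 * (2 * n) + 1 + (0 + 1) = 4 * n + 2 by omega,
      show 2 * n + (0 + 1) = 2 * n + 1 by omega]
    simp only [Nat.factorial_succ]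
    push_cast
    field_simp
    ring
  · obtain rfl : M = 2 * n + j + 1 := by omega
    rw [telescope_of_eq hk (L := 4 * n + j + 1) (by omega),
      telescope_of_eq (n := n + 1) (k := j) (L := 4 * n + j + 3) (by omega) (by omega), blockCoeff,
      show 2 * (2 * n) + 1 + (j + 1 + 1) = 4 * n + j + 3 by omega,
      show 2 * n + (j + 1 + 1) = 2 * n + j + 2 by omega]
    simp only [Nat.factorial_succ]
    push_cast
    field_simp
    ring

lemma sum_blockCoeff_even_antidiagonal (M : ℕ) :
    ∑ n ∈ range (M + 2), (if 2 * n < M + 2 then blockCoeff (2 * n) (M + 2 - 2 * n - 1) else 0)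
      = 1 := by
  have hterm (n : ℕ) : (if 2 * n < M + 2 then blockCoeff (2 * n) (M + 2 - 2 * n - 1) else 0)
      = telescope M n - telescope M (n + 1) := by
    split_ifs with h
    · rw [show M + 2 - 2 * n - 1 = M + 1 - 2 * n by omega]
      exact blockCoeff_eq_telescope_sub (by omega)
    · rw [telescope_of_lt (by omega), telescope_of_lt (by omega), sub_zero]
  rw [sum_congr rfl fun n _ => hterm n, sum_range_sub', telescope_of_lt (n := M + 2) (by omega),
    sub_zero, telescope_of_eq (k := M + 1) (L := M) (by omega) (by omega), div_self (by positivity)]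

lemma hasSum_tsum_comp_of_nonneg_of_injective {α β γ δ : Type*} {g : γ × δ → ℝ} (hg : 0 ≤ g)
    {e : α × β → γ × δ} (he : Injective e) (hsupp : support g ⊆ Set.range e) {s : γ → ℝ}
    (hs : ∀ c, HasSum (fun d => g (c, d)) (s c)) {S : ℝ} (hS : HasSum s S) :
    HasSum (fun a => ∑' b, g (e (a, b))) S := by
  have hg_sum : Summable g :=
    (summable_prod_of_nonneg hg).2 ⟨fun c => (hs c).summable, by
      simpa only [(hs _).tsum_eq] using hS.summable⟩
  have hgS : HasSum g S := hS.unique (hg_sum.hasSum.prod_fiberwise hs) ▸ hg_sum.hasSum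
  have hgeS : HasSum (g ∘ e) S :=
    (he.hasSum_iff fun p hp => notMem_support.1 fun h => hp (hsupp h)).2 hgS
  exact hgeS.prod_fiberwise fun a => (hgeS.summable.prod_factor a).hasSum

noncomputable def blockTermByDegree (x : ℝ) (N n : ℕ) : ℝ :=
  (if 2 * n < N then blockCoeff (2 * n) (N - 2 * n - 1) else 0) * x ^ N

lemma blockTermByDegree_nonneg {x : ℝ} (hx : 0 ≤ x) (N n : ℕ) : 0 ≤ blockTermByDegree x N n := by
  have : 0 ≤ blockCoeff (2 * n) (N - 2 * n - 1) := by unfold blockCoeff; positivity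
  unfold blockTermByDegree
  positivity

lemma hasSum_sum_blockTermByDegree {x : ℝ} (hx0 : 0 ≤ x) (hx1 : x < 1) :
    HasSum (fun N => ∑ n ∈ range N, blockTermByDegree x N n) (x / (1 - x) + x) := by
  refine (hasSum_nat_add_iff' 2).1 ?_
  have hhigh (M : ℕ) : ∑ n ∈ range (M + 2), blockTermByDegree x (M + 2) n = x ^ 2 * x ^ M := by
    simp only [blockTermByDegree]
    rw [← sum_mul, sum_blockCoeff_even_antidiagonal, one_mul, pow_add, mul_comm]
  have hlow : ∑ N ∈ range 2, ∑ n ∈ range N, blockTermByDegree x N n = 2 * x := by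
    simp [blockTermByDegree, sum_range_succ, blockCoeff]
  have hx : (1 : ℝ) - x ≠ 0 := by linarith
  rw [hlow, show x / (1 - x) + x - 2 * x = x ^ 2 * (1 - x)⁻¹ by field_simp; ring]
  simpa only [hhigh] using (hasSum_geometric_of_lt_one hx0 hx1).mul_left (x ^ 2)

lemma hasSum_freeOPECoeff_mul_kblock {x : ℝ} (hx0 : 0 ≤ x) (hx1 : x < 1) :
    HasSum (fun n : ℕ => freeOPECoeff (2 * n) * kblock ((2 * n : ℕ) + 1) x) (x / (1 - x) + x) := by
  set g : ℕ × ℕ → ℝ := fun p => blockTermByDegree x p.1 p.2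
  set e : ℕ × ℕ → ℕ × ℕ := fun p => (2 * p.1 + 1 + p.2, p.1)
  have hseries (n : ℕ) :
      freeOPECoeff (2 * n) * kblock ((2 * n : ℕ) + 1) x = ∑' m, g (e (n, m)) := by
    rw [freeOPECoeff_mul_kblock]
    congr with m
    simp only [g, e, blockTermByDegree, if_pos (by omega : 2 * n < 2 * n + 1 + m),
      show 2 * n + 1 + m - 2 * n - 1 = m by omega]
  have he : Injective e := fun p q h => by
    simp only [e, Prod.mk.injEq] at h
    ext <;> omega
  have hsupp : support g ⊆ Set.range e := fun p hp => by
    have h : 2 * p.2 < p.1 := by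
      by_contra h
      simp [g, blockTermByDegree, h] at hp
    exact ⟨(p.2, p.1 - 2 * p.2 - 1), Prod.ext (by simp only [e]; omega) rfl⟩
  have hfiber (N : ℕ) : HasSum (fun n => g (N, n)) (∑ n ∈ range N, g (N, n)) :=
    hasSum_sum_of_ne_finset_zero fun n hn => by
      simp only [mem_range] at hn
      simp only [g, blockTermByDegree, if_neg (by omega : ¬ 2 * n < N), zero_mul]
  exact funext hseries ▸ hasSum_tsum_comp_of_nonneg_of_injective
    (fun p => blockTermByDegree_nonneg hx0 p.1 p.2) he hsupp hfiber
    (hasSum_sum_blockTermByDegree hx0 hx1)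

/-- for z ≠ z̄ in (0,1), the sum of twist-two 4d conformal blocks
with free-field OPE coefficients over even spins ℓ = 0,2,4,… (here ℓ = 2n)
resums to the connected free-scalar correlator:
`∑ 2·(Γ(ℓ+1)²/Γ(2ℓ+1))·G_{2,ℓ}(z,z̄) = z z̄/((1−z)(1−z̄)) + z z̄`. -/
theorem sum_twist_two_blocks_free (z zb : ℝ) (hz : z ∈ Set.Ioo (0 : ℝ) 1)
    (hzb : zb ∈ Set.Ioo (0 : ℝ) 1) (hne : z ≠ zb) :
    ∑' n : ℕ,
        2 * ((Real.Gamma (2 * (n : ℝ) + 1)) ^ 2 / Real.Gamma (2 * (2 * (n : ℝ)) + 1))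
          * G2block (2 * n) z zb
      = z * zb / ((1 - z) * (1 - zb)) + z * zb := by
  obtain ⟨hz0, hz1⟩ := hz
  obtain ⟨hzb0, hzb1⟩ := hzb
  have hcoeff (n : ℕ) : 2 * (Gamma (2 * (n : ℝ) + 1) ^ 2 / Gamma (2 * (2 * (n : ℝ)) + 1))
      = freeOPECoeff (2 * n) := by
    exact_mod_cast two_mul_Gamma_sq_div_Gamma (2 * n)
  have hsum := ((hasSum_freeOPECoeff_mul_kblock hz0.le hz1).sub
    (hasSum_freeOPECoeff_mul_kblock hzb0.le hzb1)).mul_left (z * zb / (z - zb))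
  convert hsum.tsum_eq using 1
  · congr with n
    rw [hcoeff, G2block]
    ring
  · have : (1 : ℝ) - z ≠ 0 := by linarith
    have : (1 : ℝ) - zb ≠ 0 := by linarith
    have : z - zb ≠ 0 := sub_ne_zero.2 hne
    field_simp
    ring
end

section
/- Inversion of the crossed-channel identity operator: for every Δ ∈ (0,1) and every real h̄ with h̄ > 1 − Δ, (2·sin²(πΔ)/π²) · (Γ(h̄)²/Γ(2h̄)) · ∫₀¹ x^{h̄+Δ−2} · (1−x)^{−Δ} · ₂F₁(h̄,h̄;2h̄;x) dx = 2·Γ(h̄+Δ−1) / (Γ(Δ)² · Γ(h̄−Δ+1)). -/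
open Real

/-!
Expand `₂F₁(h̄, h̄; 2h̄; x)` in its power series and integrate termwise against the Beta kernel
`x^(s-1) (1-x)^(-Δ)`, `s = h̄ + Δ - 1`; all terms are nonnegative, so monotone convergence
applies. Since `s + (1 - Δ) = h̄`, the ratio `B(s+n, 1-Δ) / B(s, 1-Δ) = (s)ₙ / (h̄)ₙ` cancels one
Pochhammer symbol of the numerator, and the integral becomes `B(s, 1-Δ) · ₂F₁(h̄, s; 2h̄; 1)`,
evaluated by Gauss's summation theorem. Gauss's theorem follows in the same way from Euler's
integral, with the binomial series `(1-x)^(-a) = ∑ (a)ₙ xⁿ / n!` in place of `₂F₁`. Finally the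
reflection formula `Γ(Δ) Γ(1-Δ) = π / sin(πΔ)` absorbs the prefactor.
-/

open MeasureTheory Set Filter Topology ProbabilityTheory

section Pochhammer

lemma poch_succ (a : ℝ) (n : ℕ) : poch a (n + 1) = poch a n * (a + n) :=
  ascPochhammer_succ_eval n a

lemma poch_pos {a : ℝ} (ha : 0 < a) (n : ℕ) : 0 < poch a n :=
  ascPochhammer_pos n a ha

lemma poch_le_poch {a b : ℝ} (ha : 0 < a) (hab : a ≤ b) (n : ℕ) : poch a n ≤ poch b n := by
  induction n with
  | zero => simp [poch]
  | succ n ih =>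
    rw [poch_succ, poch_succ]
    exact mul_le_mul ih (by linarith) (by positivity) (poch_pos (ha.trans_le hab) n).le

lemma Gamma_add_nat_eq_poch_mul {a : ℝ} (ha : 0 < a) (n : ℕ) :
    Gamma (a + n) = poch a n * Gamma a := by
  induction n with
  | zero => simp [poch]
  | succ n ih =>
    rw [Nat.cast_succ, ← add_assoc, Gamma_add_one (by positivity), ih, poch_succ]
    ring

lemma ringChoose_add_sub_one_eq_poch_div_factorial (a : ℝ) (n : ℕ) :
    Ring.choose (a + n - 1) n = poch a n / n.factorial := by
  rw [← Ring.multichoose_eq, eq_div_iff (by positivity), mul_comm, ← nsmul_eq_mul,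
    Ring.factorial_nsmul_multichoose_eq_ascPochhammer,
    Polynomial.ascPochhammer_smeval_eq_eval, poch]

theorem hasSum_poch_div_factorial_mul_pow (a : ℝ) {x : ℝ} (hx : |x| < 1) :
    HasSum (fun n ↦ poch a n / n.factorial * x ^ n) ((1 - x) ^ (-a)) := by
  have h := (one_div_one_sub_rpow_hasFPowerSeriesOnBall_zero a).hasSum
    (y := x) (by simpa [Metric.mem_eball, edist_dist] using hx)
  simp only [FormalMultilinearSeries.ofScalars_apply_eq, smul_eq_mul, zero_add,
    ringChoose_add_sub_one_eq_poch_div_factorial] at h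
  rwa [one_div, ← rpow_neg (by linarith [(abs_lt.mp hx).2])] at h

end Pochhammer

lemma hasSum_of_tsum_ofReal_eq {f : ℕ → ℝ} {c : ℝ} (hf : ∀ n, 0 ≤ f n) (hc : 0 ≤ c)
    (h : ∑' n, ENNReal.ofReal (f n) = ENNReal.ofReal c) : HasSum f c := by
  have hsum : Summable f := by
    refine (ENNReal.summable_toReal (h ▸ ENNReal.ofReal_ne_top)).congr fun n ↦ ?_
    exact ENNReal.toReal_ofReal (hf n)
  rw [← ENNReal.ofReal_tsum_of_nonneg hf hsum,
    ENNReal.ofReal_eq_ofReal_iff (tsum_nonneg hf) hc] at h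
  exact h ▸ hsum.hasSum

section Beta

variable {p q : ℝ}

lemma lintegral_rpow_mul_one_sub_rpow (hp : 0 < p) (hq : 0 < q) :
    ∫⁻ x in Ioo (0 : ℝ) 1, ENNReal.ofReal (x ^ (p - 1) * (1 - x) ^ (q - 1))
      = ENNReal.ofReal (beta p q) := by
  have h := lintegral_betaPDF_eq_one hp hq
  have hB := beta_pos hp hq
  rw [lintegral_betaPDF] at h
  simp_rw [mul_assoc, ENNReal.ofReal_mul (one_div_pos.2 hB).le] at h
  rw [lintegral_const_mul _ (by fun_prop)] at h
  rw [ENNReal.eq_inv_of_mul_eq_one_left ((mul_comm _ _).trans h), one_div,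
    ENNReal.ofReal_inv_of_pos hB, inv_inv]

lemma beta_add_nat (hp : 0 < p) (hq : 0 < q) (n : ℕ) :
    beta (p + n) q = poch p n / poch (p + q) n * beta p q := by
  have hpq : 0 < p + q := by positivity
  rw [beta, beta, add_right_comm, Gamma_add_nat_eq_poch_mul hp, Gamma_add_nat_eq_poch_mul hpq]
  have := poch_pos hpq n
  have := Gamma_pos_of_pos hpq
  field_simp

variable {a : ℕ → ℝ} {f : ℝ → ℝ}

lemma lintegral_rpow_mul_one_sub_rpow_mul_of_hasSum (ha : ∀ n, 0 ≤ a n) (hp : 0 < p)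
    (hq : 0 < q) (hf : ∀ x ∈ Ioo (0 : ℝ) 1, HasSum (fun n ↦ a n * x ^ n) (f x)) :
    ∫⁻ x in Ioo (0 : ℝ) 1, ENNReal.ofReal (x ^ (p - 1) * (1 - x) ^ (q - 1) * f x)
      = ∑' n, ENNReal.ofReal (a n * beta (p + n) q) := by
  have hterms : ∀ x ∈ Ioo (0 : ℝ) 1, HasSum
      (fun n ↦ a n * (x ^ (p + n - 1) * (1 - x) ^ (q - 1)))
      (x ^ (p - 1) * (1 - x) ^ (q - 1) * f x) := by
    intro x hx
    refine ((hf x hx).mul_left (x ^ (p - 1) * (1 - x) ^ (q - 1))).congr_fun fun n ↦ ?_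
    rw [add_sub_right_comm, rpow_add hx.1, rpow_natCast]
    ring
  calc _ = ∫⁻ x in Ioo (0 : ℝ) 1, ∑' n, ENNReal.ofReal (a n) *
        ENNReal.ofReal (x ^ (p + n - 1) * (1 - x) ^ (q - 1)) := by
        refine setLIntegral_congr_fun measurableSet_Ioo fun x hx ↦ ?_
        have hx1 : 0 < 1 - x := sub_pos.2 hx.2
        have hx0 := hx.1
        rw [← (hterms x hx).tsum_eq, ENNReal.ofReal_tsum_of_nonneg
          (fun n ↦ mul_nonneg (ha n) (by positivity)) (hterms x hx).summable]
        simp_rw [ENNReal.ofReal_mul (ha _)]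
    _ = ∑' n, ENNReal.ofReal (a n) * ENNReal.ofReal (beta (p + n) q) := by
        rw [lintegral_tsum fun n ↦ by fun_prop]
        refine tsum_congr fun n ↦ ?_
        rw [lintegral_const_mul _ (by fun_prop),
          lintegral_rpow_mul_one_sub_rpow (by positivity) hq]
    _ = _ := by simp_rw [ENNReal.ofReal_mul (ha _)]

lemma integral_rpow_mul_one_sub_rpow_mul_of_hasSum (ha : ∀ n, 0 ≤ a n) (hp : 0 < p) (hq : 0 < q)
    (hf : ∀ x ∈ Ioo (0 : ℝ) 1, HasSum (fun n ↦ a n * x ^ n) (f x)) {S : ℝ}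
    (hS : HasSum (fun n ↦ a n * beta (p + n) q) S) :
    ∫ x in Ioo (0 : ℝ) 1, x ^ (p - 1) * (1 - x) ^ (q - 1) * f x = S := by
  have hnonneg : ∀ x ∈ Ioo (0 : ℝ) 1, 0 ≤ x ^ (p - 1) * (1 - x) ^ (q - 1) * f x := by
    intro x hx
    have hx1 : 0 < 1 - x := sub_pos.2 hx.2
    have hx0 := hx.1
    have := (hf x hx).nonneg fun n ↦ mul_nonneg (ha n) (by positivity)
    positivity
  have hmeas : AEStronglyMeasurable (fun x ↦ x ^ (p - 1) * (1 - x) ^ (q - 1) * f x)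
      (volume.restrict (Ioo (0 : ℝ) 1)) := by
    refine aestronglyMeasurable_of_tendsto_ae (atTop : Filter ℕ)
      (f := fun N x ↦ x ^ (p - 1) * (1 - x) ^ (q - 1) * ∑ n ∈ Finset.range N, a n * x ^ n)
      (fun N ↦ by fun_prop) ?_
    filter_upwards [ae_restrict_mem measurableSet_Ioo] with x hx
    exact (hf x hx).tendsto_sum_nat.const_mul _
  have hterms : ∀ n, 0 ≤ a n * beta (p + n) q :=
    fun n ↦ mul_nonneg (ha n) (beta_pos (by positivity) hq).le
  rw [integral_eq_lintegral_of_nonneg_ae (ae_restrict_of_forall_mem measurableSet_Ioo hnonneg)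
    hmeas, lintegral_rpow_mul_one_sub_rpow_mul_of_hasSum ha hp hq hf,
    ← ENNReal.ofReal_tsum_of_nonneg hterms hS.summable, hS.tsum_eq,
    ENNReal.toReal_ofReal (hS.nonneg hterms)]

end Beta

section Hypergeometric

variable {a b c : ℝ}

noncomputable def hypergeomCoeff (a b c : ℝ) (n : ℕ) : ℝ :=
  poch a n * poch b n / (poch c n * n.factorial)

lemma hypergeomCoeff_nonneg (ha : 0 < a) (hb : 0 < b) (hc : 0 < c) (n : ℕ) :
    0 ≤ hypergeomCoeff a b c n := by
  have := poch_pos ha n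
  have := poch_pos hb n
  have := poch_pos hc n
  unfold hypergeomCoeff
  positivity

lemma hypergeomCoeff_le (ha : 0 < a) (hb : 0 < b) (hbc : b ≤ c) (n : ℕ) :
    hypergeomCoeff a b c n ≤ poch a n / n.factorial := by
  have hc := poch_pos (hb.trans_le hbc) n
  have hratio : poch b n / poch c n ≤ 1 := (div_le_one hc).2 (poch_le_poch hb hbc n)
  calc hypergeomCoeff a b c n = poch a n / n.factorial * (poch b n / poch c n) := by
        unfold hypergeomCoeff
        field_simp
    _ ≤ poch a n / n.factorial := by
        have := poch_pos ha n
        exact mul_le_of_le_one_right (by positivity) hratio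

lemma hasSum_F21 (ha : 0 < a) (hb : 0 < b) (hbc : b ≤ c) {x : ℝ} (hx : |x| < 1) :
    HasSum (fun n ↦ hypergeomCoeff a b c n * x ^ n) (F21 a b c x) := by
  refine Summable.hasSum (Summable.of_norm_bounded
    (hasSum_poch_div_factorial_mul_pow a (by rwa [abs_abs])).summable fun n ↦ ?_)
  rw [norm_mul, norm_pow, Real.norm_eq_abs, Real.norm_eq_abs,
    abs_of_nonneg (hypergeomCoeff_nonneg ha hb (hb.trans_le hbc) n)]
  gcongr
  exact hypergeomCoeff_le ha hb hbc n

theorem hasSum_hypergeomCoeff_gauss (ha : 0 < a) (hb : 0 < b) (habc : a + b < c) :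
    HasSum (hypergeomCoeff a b c)
      (Gamma c * Gamma (c - a - b) / (Gamma (c - a) * Gamma (c - b))) := by
  have hcb : 0 < c - b := by linarith
  have hcab : 0 < c - a - b := by linarith
  have hcoeff : ∀ n, 0 ≤ poch a n / n.factorial :=
    fun n ↦ div_nonneg (poch_pos ha n).le n.factorial.cast_nonneg
  have euler := lintegral_rpow_mul_one_sub_rpow_mul_of_hasSum hcoeff hb hcb
    (f := fun x ↦ (1 - x) ^ (-a)) fun x hx ↦ hasSum_poch_div_factorial_mul_pow a
      (abs_lt.2 ⟨by linarith [hx.1], hx.2⟩)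
  rw [setLIntegral_congr_fun measurableSet_Ioo
    (g := fun x ↦ ENNReal.ofReal (x ^ (b - 1) * (1 - x) ^ (c - a - b - 1))) fun x hx ↦ by
      rw [mul_assoc, ← rpow_add (sub_pos.2 hx.2)]
      ring_nf,
    lintegral_rpow_mul_one_sub_rpow hb hcab] at euler
  -- The Euler integral is finite, and by Tonelli this is what makes the Gauss series converge.
  have hsum : HasSum (fun n ↦ hypergeomCoeff a b c n * beta b (c - b)) (beta b (c - a - b)) := by
    refine hasSum_of_tsum_ofReal_eq
      (fun n ↦ mul_nonneg (hypergeomCoeff_nonneg ha hb (by linarith) n) (beta_pos hb hcb).le)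
      (beta_pos hb hcab).le (euler ▸ tsum_congr fun n ↦ ?_)
    rw [beta_add_nat hb hcb, add_sub_cancel, hypergeomCoeff]
    congr 1
    ring
  have hB := (beta_pos hb hcb).ne'
  have hval : Gamma c * Gamma (c - a - b) / (Gamma (c - a) * Gamma (c - b))
      = beta b (c - a - b) / beta b (c - b) := by
    unfold beta
    rw [show b + (c - a - b) = c - a by ring, add_sub_cancel]
    have := (Gamma_pos_of_pos hb).ne'
    have := (Gamma_pos_of_pos (by linarith : 0 < c)).ne'
    have := (Gamma_pos_of_pos hcb).ne'
    have := (Gamma_pos_of_pos (by linarith : 0 < c - a)).ne'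
    field_simp
  rw [hval]
  simpa only [mul_div_cancel_right₀ _ hB] using hsum.div_const (beta b (c - b))

end Hypergeometric

theorem integral_rpow_mul_one_sub_rpow_mul_F21 {a s q c : ℝ} (ha : 0 < a) (hs : 0 < s)
    (hq : 0 < q) (hc : s + q ≤ c) (hasc : a + s < c) :
    ∫ x in Ioo (0 : ℝ) 1, x ^ (s - 1) * (1 - x) ^ (q - 1) * F21 a (s + q) c x
      = beta s q * (Gamma c * Gamma (c - a - s) / (Gamma (c - a) * Gamma (c - s))) := by
  have hsq : 0 < s + q := by positivity
  refine integral_rpow_mul_one_sub_rpow_mul_of_hasSum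
    (hypergeomCoeff_nonneg ha hsq (hsq.trans_le hc)) hs hq
    (fun x hx ↦ hasSum_F21 ha hsq hc (abs_lt.2 ⟨by linarith [hx.1], hx.2⟩)) ?_
  refine ((hasSum_hypergeomCoeff_gauss ha hs hasc).mul_left (beta s q)).congr_fun fun n ↦ ?_
  have := (poch_pos hsq n).ne'
  rw [beta_add_nat hs hq, hypergeomCoeff, hypergeomCoeff]
  field_simp

lemma sin_pi_mul_div_pi (s : ℝ) : sin (π * s) / π = (Gamma s * Gamma (1 - s))⁻¹ := by
  rw [Gamma_mul_Gamma_one_sub, inv_div]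

/-- inversion of the crossed-channel identity operator.
For Δ ∈ (0,1) and h̄ > 1 − Δ:
`(2 sin²(πΔ)/π²)·(Γ(h̄)²/Γ(2h̄))·∫₀¹ x^{h̄+Δ−2}(1−x)^{−Δ} ₂F₁(h̄,h̄;2h̄;x) dx
  = 2Γ(h̄+Δ−1)/(Γ(Δ)²Γ(h̄−Δ+1))`. -/
theorem inversion_identity_operator (Δ : ℝ) (hΔ : Δ ∈ Set.Ioo (0 : ℝ) 1)
    (hb : ℝ) (hhb : 1 - Δ < hb) :
    2 * (Real.sin (π * Δ)) ^ 2 / π ^ 2 * ((Real.Gamma hb) ^ 2 / Real.Gamma (2 * hb)) *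
        ∫ x in (0 : ℝ)..1, x ^ (hb + Δ - 2) * (1 - x) ^ (-Δ) * F21 hb hb (2 * hb) x
      = 2 * Real.Gamma (hb + Δ - 1) / ((Real.Gamma Δ) ^ 2 * Real.Gamma (hb - Δ + 1)) := by
  obtain ⟨hΔ0, hΔ1⟩ := hΔ
  have euler : ∫ x in Ioo (0 : ℝ) 1, x ^ (hb + Δ - 2) * (1 - x) ^ (-Δ) * F21 hb hb (2 * hb) x
      = beta (hb + Δ - 1) (1 - Δ)
        * (Gamma (2 * hb) * Gamma (1 - Δ) / (Gamma hb * Gamma (hb - Δ + 1))) := by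
    convert integral_rpow_mul_one_sub_rpow_mul_F21 (a := hb) (s := hb + Δ - 1) (q := 1 - Δ)
      (c := 2 * hb) (by linarith) (by linarith) (by linarith) (by linarith) (by linarith)
      using 4 <;> ring_nf
  rw [intervalIntegral.integral_of_le zero_le_one, integral_Ioc_eq_integral_Ioo, euler, beta,
    show hb + Δ - 1 + (1 - Δ) = hb by ring,
    show 2 * sin (π * Δ) ^ 2 / π ^ 2 = 2 * (sin (π * Δ) / π) ^ 2 by ring, sin_pi_mul_div_pi]
  have := (Gamma_pos_of_pos (by linarith : 0 < hb)).ne'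
  have := (Gamma_pos_of_pos (by linarith : 0 < 2 * hb)).ne'
  have := (Gamma_pos_of_pos hΔ0).ne'
  have := (Gamma_pos_of_pos (by linarith : 0 < 1 - Δ)).ne'
  have := (Gamma_pos_of_pos (by linarith : 0 < hb - Δ + 1)).ne'
  field_simp
end
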